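/- arXiv:2112.12295 — 3 statements merged into one kernel-verified Lean document; each statement's English description precedes it below -/
import Mathlib

section
/- Suppose the cost matrix satisfies c[i][i] = α for all i and c[i][j] ≥ 2α + 1 whenever (i,j) is an inadmissible pair with i ≠ j, where α ≥ 0. If A is a feasible matrix with A[i][j] = 1 for some inadmissible pair (i,j) with i ≠ j, then A is not a global minimum of the matching ILP: the matrix B obtained by setting B[i][j]=0, B[i][i]=1, B[j][j]=1 and otherwise agreeing with A is feasible and has strictly smaller objective value. -/
/-!
Both the number of times a vertex is covered and the objective are additive in the assignment
matrix. Replacing the pair `(i, j)` by the two singletons `i` and `j` adds `E_ii + E_jj - E_ij`,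
which covers every vertex zero times and changes the objective by
`c i i + c j j - c i j = 2α - c i j ≤ -1`.
-/

open Finset Matrix

namespace MatchingILP

variable {ι R : Type*}

/-- `A i j = 1` (`i ≠ j`) puts the pair `{i, j}` into the matching and `A i i = 1` leaves `i`
single, so this counts how often `k` is covered; the diagonal entry lies in both sums. -/
def coverage [Fintype ι] [AddCommGroup R] (k : ι) : Matrix ι ι R →+ R :=
  AddMonoidHom.mk' (fun M : Matrix ι ι R => ∑ a, M a k + ∑ b, M k b - M k k) fun M N => by
    simp only [Matrix.add_apply, sum_add_distrib]
    abel

def cost [Fintype ι] [NonUnitalNonAssocSemiring R] (c : ι → ι → R) : Matrix ι ι R →+ R where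
  toFun M := ∑ a, ∑ b, M a b * c a b
  map_zero' := by simp
  map_add' M N := by simp only [Matrix.add_apply, add_mul, sum_add_distrib]

theorem coverage_single [Fintype ι] [DecidableEq ι] [AddCommGroup R] (a b k : ι) (r : R) :
    coverage k (single a b r) =
      (if b = k then r else 0) + (if a = k then r else 0) - if a = k ∧ b = k then r else 0 := by
  simp [coverage, single_apply, ite_and]

theorem cost_single [Fintype ι] [DecidableEq ι] [NonUnitalNonAssocSemiring R] (c : ι → ι → R)
    (a b : ι) (r : R) :
    cost c (single a b r) = r * c a b := by
  simp [cost, single_apply, ite_and]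

def unpair [DecidableEq ι] [Ring R] (i j : ι) : Matrix ι ι R :=
  single i i 1 + single j j 1 - single i j 1

theorem coverage_unpair [Fintype ι] [DecidableEq ι] [Ring R] {i j : ι} (hij : i ≠ j) (k : ι) :
    coverage k (unpair i j : Matrix ι ι R) = 0 := by
  simp only [unpair, map_add, map_sub, coverage_single]
  by_cases hki : i = k <;> by_cases hkj : j = k <;> simp [hki, hkj]
  exact (hij (hki.trans hkj.symm)).elim

theorem cost_unpair [Fintype ι] [DecidableEq ι] [Ring R] (c : ι → ι → R) (i j : ι) :
    cost c (unpair i j) = c i i + c j j - c i j := by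
  simp only [unpair, map_add, map_sub, cost_single, one_mul]

def ofBool [NatCast R] (A : ι → ι → Bool) : Matrix ι ι R :=
  of fun a b => ((A a b).toNat : R)

theorem cast_coverage_ofBool [Fintype ι] [Ring R] (A : ι → ι → Bool) (k : ι) :
    (((∑ a, (A a k).toNat) + (∑ b, (A k b).toNat) - (A k k).toNat : ℕ) : R) =
      coverage k (ofBool A) := by
  have hdiag : (A k k).toNat ≤ ∑ b, (A k b).toNat :=
    single_le_sum (f := fun b => (A k b).toNat) (fun b _ => Nat.zero_le _) (mem_univ k)
  rw [Nat.cast_sub (hdiag.trans (Nat.le_add_left _ _))]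
  simp [coverage, ofBool]

theorem ofBool_eq_add_unpair [DecidableEq ι] [Ring R] {A B : ι → ι → Bool} {i j : ι}
    (hij : i ≠ j) (hAij : A i j = true) (hAii : A i i = false) (hAjj : A j j = false)
    (hB : ∀ a b, B a b = if (a, b) = (i, j) then false
      else if (a, b) = (i, i) then true
      else if (a, b) = (j, j) then true
      else A a b) :
    (ofBool B : Matrix ι ι R) = ofBool A + unpair i j := by
  ext a b
  by_cases hai : a = i <;> by_cases haj : a = j <;> by_cases hbi : b = i <;>
    by_cases hbj : b = j <;> subst_vars <;>
    simp_all [ofBool, unpair, Ne.symm]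

end MatchingILP

open MatchingILP in
theorem stmt5_general (N : ℕ) (Adm : Fin N → Fin N → Prop)
    (α : ℝ) (c : Fin N → Fin N → ℝ)
    (hdiag : ∀ i, c i i = α)
    (hbad : ∀ i j, i ≠ j → ¬ Adm i j → 2 * α + 1 ≤ c i j)
    (A : Fin N → Fin N → Bool)
    (hfeas : ∀ k : Fin N,
      (∑ i, (A i k).toNat) + (∑ j, (A k j).toNat) - (A k k).toNat = 1)
    (i j : Fin N) (hij : i ≠ j) (hAij : A i j = true) (hbadij : ¬ Adm i j)
    (hAii : A i i = false) (hAjj : A j j = false)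
    (B : Fin N → Fin N → Bool)
    (hB : ∀ a b, B a b = if (a, b) = (i, j) then false
      else if (a, b) = (i, i) then true
      else if (a, b) = (j, j) then true
      else A a b) :
    (∀ k : Fin N,
      (∑ a, (B a k).toNat) + (∑ b, (B k b).toNat) - (B k k).toNat = 1) ∧
    (∑ a, ∑ b, ((B a b).toNat : ℝ) * c a b) <
      (∑ a, ∑ b, ((A a b).toNat : ℝ) * c a b) := by
  have hBA : (ofBool B : Matrix (Fin N) (Fin N) ℝ) = ofBool A + unpair i j :=
    ofBool_eq_add_unpair hij hAij hAii hAjj hB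
  refine ⟨fun k => ?_, ?_⟩
  · have hcov : coverage k (ofBool B : Matrix (Fin N) (Fin N) ℝ) = coverage k (ofBool A) := by
      rw [hBA, map_add, coverage_unpair hij, add_zero]
    rw [← cast_coverage_ofBool, ← cast_coverage_ofBool, hfeas k] at hcov
    exact_mod_cast hcov
  · change cost c (ofBool B) < cost c (ofBool A)
    rw [hBA, map_add, cost_unpair]
    linarith [hdiag i, hdiag j, hbad i j hij hbadij]

theorem stmt5 (N : ℕ) (Adm : Fin N → Fin N → Prop)
    (hAdm : ∀ i j, Adm i j → i ≠ j)
    (α : ℝ) (hα : 0 ≤ α) (c : Fin N → Fin N → ℝ)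
    (hdiag : ∀ i, c i i = α)
    (hbad : ∀ i j, i ≠ j → ¬ Adm i j → 2 * α + 1 ≤ c i j)
    (A : Fin N → Fin N → Bool)
    (hfeas : ∀ k : Fin N,
      (∑ i, (A i k).toNat) + (∑ j, (A k j).toNat) - (A k k).toNat = 1)
    (i j : Fin N) (hij : i ≠ j) (hAij : A i j = true) (hbadij : ¬ Adm i j)
    (hAii : A i i = false) (hAjj : A j j = false)
    (B : Fin N → Fin N → Bool)
    (hB : ∀ a b, B a b = if (a, b) = (i, j) then false
      else if (a, b) = (i, i) then true
      else if (a, b) = (j, j) then true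
      else A a b) :
    (∀ k : Fin N,
      (∑ a, (B a k).toNat) + (∑ b, (B k b).toNat) - (B k k).toNat = 1) ∧
    (∑ a, ∑ b, ((B a b).toNat : ℝ) * c a b) <
      (∑ a, ∑ b, ((A a b).toNat : ℝ) * c a b) :=
  stmt5_general N Adm α c hdiag hbad A hfeas i j hij hAij hbadij hAii hAjj B hB
end

section
/- Any feasible matrix A of the matching ILP can be transformed into a feasible matrix B whose induced matching is admissible (i.e., B[i][j] = 1 with i ≠ j only for admissible pairs), with f(B) ≤ f(A), and f(B) < f(A) whenever A contains an inadmissible match. -/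
/-!
In a feasible matrix every vertex lies in exactly one selected pair. Hence an inadmissible
match `(i, j)` is the only pair touching `i` and `j`, and replacing it by the critical entries
`(i, i)` and `(j, j)` keeps the matrix feasible while changing the cost by `2α - c i j ≤ -1`.
Doing this for every inadmissible match lowers the cost by at least their number.
-/

open Finset

namespace LoopMatching

variable {ι : Type*}

section Support

variable [Fintype ι]

def support (M : ι → ι → Bool) : Finset (ι × ι) := {p | M p.1 p.2}

theorem sum_sum_toNat_mul (M : ι → ι → Bool) (c : ι → ι → ℝ) :
    ∑ i, ∑ j, ((M i j).toNat : ℝ) * c i j = ∑ p ∈ support M, c p.1 p.2 := by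
  rw [support, sum_filter, ← Fintype.sum_prod_type']
  refine sum_congr rfl fun p _ => ?_
  cases M p.1 p.2 <;> simp

end Support

variable [DecidableEq ι]

def incident (S : Finset (ι × ι)) (k : ι) : Finset (ι × ι) := {p ∈ S | p.1 = k ∨ p.2 = k}

def Feasible (S : Finset (ι × ι)) : Prop := ∀ k, #(incident S k) = 1

def unmatch (S : Finset (ι × ι)) (i j : ι) : Finset (ι × ι) :=
  insert (i, i) (insert (j, j) (S.erase (i, j)))

def inadmissible (Adm : ι → ι → Prop) [DecidableRel Adm] (S : Finset (ι × ι)) :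
    Finset (ι × ι) :=
  {p ∈ S | p.1 ≠ p.2 ∧ ¬ Adm p.1 p.2}

theorem incident_insert (S : Finset (ι × ι)) (p : ι × ι) (k : ι) :
    incident (insert p S) k = if p.1 = k ∨ p.2 = k then insert p (incident S k) else incident S k :=
  filter_insert _ _ _

theorem incident_erase (S : Finset (ι × ι)) (p : ι × ι) (k : ι) :
    incident (S.erase p) k = (incident S k).erase p :=
  filter_erase _ _ _

section Feasible

variable {S : Finset (ι × ι)} {p : ι × ι} {k : ι}

theorem Feasible.incident_eq_singleton (hS : Feasible S) (hp : p ∈ S) (hk : p.1 = k ∨ p.2 = k) :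
    incident S k = {p} := by
  have hmem : p ∈ incident S k := mem_filter.2 ⟨hp, hk⟩
  exact eq_singleton_iff_unique_mem.2 ⟨hmem, fun q hq => card_le_one.1 (hS k).le q hq p hmem⟩

theorem Feasible.loop_not_mem (hS : Feasible S) (hp : p ∈ S) (hk : p.1 = k ∨ p.2 = k)
    (hne : p.1 ≠ p.2) : (k, k) ∉ S := by
  intro hkk
  have : (k, k) ∈ incident S k := mem_filter.2 ⟨hkk, Or.inl rfl⟩
  rw [hS.incident_eq_singleton hp hk, mem_singleton] at this
  subst this
  exact hne rfl

variable {i j : ι}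

theorem Feasible.unmatch (hS : Feasible S) (hij : (i, j) ∈ S) (hne : i ≠ j) :
    Feasible (unmatch S i j) := by
  intro k
  have hi := hS.incident_eq_singleton hij (Or.inl rfl)
  have hj := hS.incident_eq_singleton hij (Or.inr rfl)
  simp only [LoopMatching.unmatch, incident_insert, incident_erase]
  rcases eq_or_ne k i with rfl | hki
  · simp [hi, hne.symm]
  rcases eq_or_ne k j with rfl | hkj
  · simp [hj, hne]
  have hout : (i, j) ∉ incident S k := fun h => by
    rcases (mem_filter.1 h).2 with h | h
    exacts [hki h.symm, hkj h.symm]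
  simp [hki.symm, hkj.symm, erase_eq_of_notMem hout, hS k]

theorem Feasible.sum_unmatch {M : Type*} [AddCommGroup M] (w : ι × ι → M) (hS : Feasible S)
    (hij : (i, j) ∈ S) (hne : i ≠ j) :
    ∑ q ∈ LoopMatching.unmatch S i j, w q = ∑ q ∈ S, w q - w (i, j) + w (i, i) + w (j, j) := by
  have hii : (i, i) ∉ S := hS.loop_not_mem hij (Or.inl rfl) hne
  have hjj : (j, j) ∉ S := hS.loop_not_mem hij (Or.inr rfl) hne
  rw [LoopMatching.unmatch, sum_insert (by simp [hne, hii]), sum_insert (by simp [hjj]),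
    sum_erase_eq_sub hij]
  abel

end Feasible

theorem inadmissible_unmatch (Adm : ι → ι → Prop) [DecidableRel Adm] (S : Finset (ι × ι))
    (i j : ι) :
    inadmissible Adm (unmatch S i j) = (inadmissible Adm S).erase (i, j) := by
  simp [inadmissible, unmatch, filter_insert, filter_erase]

theorem Feasible.exists_admissible {Adm : ι → ι → Prop} [DecidableRel Adm] {c : ι → ι → ℝ}
    {α : ℝ} (hdiag : ∀ i, c i i = α) (hbad : ∀ i j, i ≠ j → ¬ Adm i j → 2 * α + 1 ≤ c i j)
    {S : Finset (ι × ι)} (hS : Feasible S) :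
    ∃ T, Feasible T ∧ inadmissible Adm T = ∅ ∧
      ∑ p ∈ T, c p.1 p.2 + #(inadmissible Adm S) ≤ ∑ p ∈ S, c p.1 p.2 := by
  induction hn : #(inadmissible Adm S) generalizing S with
  | zero => exact ⟨S, hS, card_eq_zero.1 hn, by simp⟩
  | succ n ih =>
    obtain ⟨⟨i, j⟩, hp⟩ := card_pos.1 (by omega : 0 < #(inadmissible Adm S))
    obtain ⟨hij, hne, hadm⟩ : (i, j) ∈ S ∧ i ≠ j ∧ ¬ Adm i j := by simpa [inadmissible] using hp
    obtain ⟨T, hT, hTadm, hcost⟩ := ih (hS.unmatch hij hne)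
      (by rw [inadmissible_unmatch, card_erase_of_mem hp, hn, Nat.add_sub_cancel])
    refine ⟨T, hT, hTadm, ?_⟩
    have hunmatch := hS.sum_unmatch (fun p => c p.1 p.2) hij hne
    have := hbad i j hne hadm
    simp only [hdiag] at hunmatch
    push_cast at hcost ⊢
    linarith

variable [Fintype ι]

theorem card_incident_support_add (M : ι → ι → Bool) (k : ι) :
    #(incident (support M) k) + (M k k).toNat = (∑ i, (M i k).toNat) + (∑ j, (M k j).toNat) := by
  have hcard (P : ι × ι → Prop) [DecidablePred P] :
      #{p ∈ support M | P p} = ∑ i, ∑ j, if P (i, j) then (M i j).toNat else 0 := by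
    rw [support, filter_filter, card_eq_sum_ones, sum_filter, ← Fintype.sum_prod_type']
    refine sum_congr rfl fun p _ => ?_
    cases M p.1 p.2 <;> simp
  have hcol : #{p ∈ support M | p.2 = k} = ∑ i, (M i k).toNat := by simp [hcard]
  have hrow : #{p ∈ support M | p.1 = k} = ∑ j, (M k j).toNat := by
    rw [hcard, sum_comm]; simp
  have hloop : #({p ∈ support M | p.1 = k} ∩ {p ∈ support M | p.2 = k}) = (M k k).toNat := by
    rw [← filter_and, hcard, sum_comm]; simp [ite_and]
  rw [incident, filter_or, ← hloop, card_union_add_card_inter, hrow, hcol, add_comm]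

theorem feasible_support_iff (M : ι → ι → Bool) :
    Feasible (support M) ↔
      ∀ k, (∑ i, (M i k).toNat) + (∑ j, (M k j).toNat) - (M k k).toNat = 1 := by
  refine forall_congr' fun k => ?_
  have := card_incident_support_add M k
  omega

theorem support_decide_mem (T : Finset (ι × ι)) : support (fun i j => decide ((i, j) ∈ T)) = T := by
  ext; simp [support]

end LoopMatching

open LoopMatching in
theorem stmt6_general (N : ℕ) (Adm : Fin N → Fin N → Prop)
    (α : ℝ) (c : Fin N → Fin N → ℝ)
    (hdiag : ∀ i, c i i = α)
    (hbad : ∀ i j, i ≠ j → ¬ Adm i j → max (2 * α + 1) 3 ≤ c i j)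
    (A : Fin N → Fin N → Bool)
    (hfeas : ∀ k : Fin N,
      (∑ i, (A i k).toNat) + (∑ j, (A k j).toNat) - (A k k).toNat = 1) :
    ∃ B : Fin N → Fin N → Bool,
      (∀ k : Fin N,
        (∑ i, (B i k).toNat) + (∑ j, (B k j).toNat) - (B k k).toNat = 1) ∧
      (∀ i j, i ≠ j → B i j = true → Adm i j) ∧
      (∑ i, ∑ j, ((B i j).toNat : ℝ) * c i j) ≤
        (∑ i, ∑ j, ((A i j).toNat : ℝ) * c i j) ∧
      ((∃ i j, i ≠ j ∧ ¬ Adm i j ∧ A i j = true) →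
        (∑ i, ∑ j, ((B i j).toNat : ℝ) * c i j) <
          (∑ i, ∑ j, ((A i j).toNat : ℝ) * c i j)) := by
  classical
  obtain ⟨T, hT, hTadm, hcost⟩ := ((feasible_support_iff A).2 hfeas).exists_admissible hdiag
    fun i j hij hadm => (le_max_left _ _).trans (hbad i j hij hadm)
  have hsupport := support_decide_mem T
  refine ⟨fun i j => decide ((i, j) ∈ T), (feasible_support_iff _).1 (by rwa [hsupport]), ?_, ?_, ?_⟩
  · intro i j hij hmem
    by_contra hadm
    exact filter_eq_empty_iff.1 hTadm (of_decide_eq_true hmem) ⟨hij, hadm⟩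
  · rw [sum_sum_toNat_mul, sum_sum_toNat_mul, hsupport]
    linarith [(Nat.cast_nonneg _ : (0 : ℝ) ≤ #(inadmissible Adm (support A)))]
  · rintro ⟨i, j, hij, hadm, hA⟩
    have : (1 : ℝ) ≤ #(inadmissible Adm (support A)) := by
      exact_mod_cast card_pos.2 ⟨(i, j), by simp [inadmissible, support, hij, hadm, hA]⟩
    rw [sum_sum_toNat_mul, sum_sum_toNat_mul, hsupport]
    linarith

theorem stmt6 (N : ℕ) (Adm : Fin N → Fin N → Prop)
    (hAdm : ∀ i j, Adm i j → i ≠ j)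
    (α : ℝ) (hα0 : 0 ≤ α) (hα2 : α ≤ 2) (c : Fin N → Fin N → ℝ)
    (hdiag : ∀ i, c i i = α)
    (hbad : ∀ i j, i ≠ j → ¬ Adm i j → max (2 * α + 1) 3 ≤ c i j)
    (A : Fin N → Fin N → Bool)
    (hfeas : ∀ k : Fin N,
      (∑ i, (A i k).toNat) + (∑ j, (A k j).toNat) - (A k k).toNat = 1) :
    ∃ B : Fin N → Fin N → Bool,
      (∀ k : Fin N,
        (∑ i, (B i k).toNat) + (∑ j, (B k j).toNat) - (B k k).toNat = 1) ∧
      (∀ i j, i ≠ j → B i j = true → Adm i j) ∧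
      (∑ i, ∑ j, ((B i j).toNat : ℝ) * c i j) ≤
        (∑ i, ∑ j, ((A i j).toNat : ℝ) * c i j) ∧
      ((∃ i j, i ≠ j ∧ ¬ Adm i j ∧ A i j = true) →
        (∑ i, ∑ j, ((B i j).toNat : ℝ) * c i j) <
          (∑ i, ∑ j, ((A i j).toNat : ℝ) * c i j)) :=
  stmt6_general N Adm α c hdiag hbad A hfeas
end

section
/- Let l = min over i ≠ j of c[i][j] and assume c[i][j] > 0 for all i ≠ j and c[i][i] = α for all i with 2α < l. Then the unique global minimum of the matching ILP is the identity matrix: A[i][i] = 1 for all i and A[i][j] = 0 for i ≠ j. -/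
/-!
Counting the ones of a feasible matrix twice, once per row and once per column, gives
`2 · #ones = N + #diagonal ones`. Hence the cost of a feasible `A` is `N α` plus
`∑ A i j (c i j - 2α)` over the off-diagonal ones, each term positive since `2α < c i j`.
The identity is the only feasible matrix without off-diagonal ones, so it is the unique minimiser.
-/

open Finset

variable {ι : Type*}

section ReducedCost

variable [DecidableEq ι] {c : ι → ι → ℝ} {α : ℝ}

def reducedCost (c : ι → ι → ℝ) (α : ℝ) (i j : ι) : ℝ :=
  c i j - 2 * α + if i = j then α else 0

lemma reducedCost_self (hdiag : ∀ i, c i i = α) (i : ι) : reducedCost c α i i = 0 := by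
  simp only [reducedCost, hdiag, if_true]
  ring

lemma reducedCost_pos {i j : ι} (hij : i ≠ j) (hlt : 2 * α < c i j) :
    0 < reducedCost c α i j := by
  simpa [reducedCost, hij] using hlt

lemma reducedCost_nonneg (hdiag : ∀ i, c i i = α) (hmin : ∀ i j, i ≠ j → 2 * α < c i j)
    (i j : ι) : 0 ≤ reducedCost c α i j := by
  obtain rfl | hij := eq_or_ne i j
  · exact (reducedCost_self hdiag i).ge
  · exact (reducedCost_pos hij (hmin i j hij)).le

end ReducedCost

variable [Fintype ι]

/-- Every index is matched exactly once: to itself by `B k k`, or to one partner through row or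
column `k`; the subtraction stops the diagonal entry from being counted twice. -/
def IsMatchingMatrix (B : ι → ι → Bool) : Prop :=
  ∀ k, (∑ i, (B i k).toNat) + (∑ j, (B k j).toNat) - (B k k).toNat = 1

def matchingCost (c : ι → ι → ℝ) (B : ι → ι → Bool) : ℝ :=
  ∑ i, ∑ j, ((B i j).toNat : ℝ) * c i j

lemma isMatchingMatrix_id [DecidableEq ι] :
    IsMatchingMatrix (fun i j : ι => decide (i = j)) := by
  intro k
  simp [Bool.toNat, Bool.cond_decide]

lemma matchingCost_id [DecidableEq ι] {c : ι → ι → ℝ} {α : ℝ}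
    (hdiag : ∀ i, c i i = α) :
    matchingCost c (fun i j => decide (i = j)) = Fintype.card ι * α := by
  simp [matchingCost, Bool.toNat, Bool.cond_decide, hdiag]

lemma matchingCost_pos {w : ι → ι → ℝ} {B : ι → ι → Bool} (hw : ∀ i j, 0 ≤ w i j)
    {i₀ j₀ : ι} (hw₀ : 0 < w i₀ j₀) (hB₀ : B i₀ j₀ = true) :
    0 < matchingCost w B := by
  have hterm_nonneg : ∀ i j, 0 ≤ ((B i j).toNat : ℝ) * w i j :=
    fun i j => mul_nonneg (Nat.cast_nonneg _) (hw i j)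
  have hterm_pos : 0 < ((B i₀ j₀).toNat : ℝ) * w i₀ j₀ := by simpa [hB₀] using hw₀
  exact sum_pos' (fun i _ => sum_nonneg fun j _ => hterm_nonneg i j)
    ⟨i₀, mem_univ _,
      sum_pos' (fun j _ => hterm_nonneg i₀ j) ⟨j₀, mem_univ _, hterm_pos⟩⟩

namespace IsMatchingMatrix

variable {B : ι → ι → Bool}

lemma sum_col_add_sum_row (hB : IsMatchingMatrix B) (k : ι) :
    (∑ i, (B i k).toNat) + (∑ j, (B k j).toNat) = 1 + (B k k).toNat := by
  have hdiag_le : (B k k).toNat ≤ ∑ i, (B i k).toNat :=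
    single_le_sum (f := fun i => (B i k).toNat) (fun _ _ => Nat.zero_le _) (mem_univ k)
  have := hB k
  omega

lemma two_mul_sum_eq_card_add_sum_diag (hB : IsMatchingMatrix B) :
    2 * ∑ i, ∑ j, (B i j).toNat = Fintype.card ι + ∑ k, (B k k).toNat := by
  have := sum_congr rfl fun k (_ : k ∈ univ) => hB.sum_col_add_sum_row k
  rw [sum_add_distrib, sum_add_distrib, sum_comm] at this
  simpa [two_mul] using this

lemma eq_id_of_offDiag_eq_false [DecidableEq ι] (hB : IsMatchingMatrix B)
    (hoff : ∀ i j, i ≠ j → B i j = false) : B = fun i j => decide (i = j) := by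
  funext i j
  by_cases hij : i = j
  · subst hij
    have hcover := hB.sum_col_add_sum_row i
    rw [sum_eq_single i (fun k _ hk => by simp [hoff k i hk]) (by simp),
      sum_eq_single i (fun k _ hk => by simp [hoff i k (Ne.symm hk)]) (by simp)] at hcover
    cases h : B i i <;> simp_all
  · simp [hoff i j hij, hij]

lemma matchingCost_eq [DecidableEq ι] (hB : IsMatchingMatrix B) (c : ι → ι → ℝ)
    (α : ℝ) :
    matchingCost c B = Fintype.card ι * α + matchingCost (reducedCost c α) B := by
  have hcount : 2 * ∑ i, ∑ j, ((B i j).toNat : ℝ) =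
      Fintype.card ι + ∑ k, ((B k k).toNat : ℝ) := by
    exact_mod_cast hB.two_mul_sum_eq_card_add_sum_diag
  have hsplit : matchingCost (reducedCost c α) B = matchingCost c B -
      2 * α * ∑ i, ∑ j, ((B i j).toNat : ℝ) + α * ∑ k, ((B k k).toNat : ℝ) := by
    simp only [matchingCost, reducedCost, mul_add, mul_sub, sum_add_distrib, sum_sub_distrib,
      mul_ite, mul_zero, sum_ite_eq, mem_univ, if_true, mul_sum]
    congr 1
    · congr 1
      exact sum_congr rfl fun i _ => sum_congr rfl fun j _ => by ring
    · exact sum_congr rfl fun i _ => by ring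
  linear_combination α * hcount - hsplit

end IsMatchingMatrix

theorem stmt7_general (N : ℕ) (α : ℝ) (c : Fin N → Fin N → ℝ)
    (hdiag : ∀ i, c i i = α)
    (hmin : ∀ i j, i ≠ j → 2 * α < c i j) :
    (∀ k : Fin N,
      (∑ i, ((fun i j : Fin N => decide (i = j)) i k).toNat) +
        (∑ j, ((fun i j : Fin N => decide (i = j)) k j).toNat) -
        ((fun i j : Fin N => decide (i = j)) k k).toNat = 1) ∧
    ∀ B : Fin N → Fin N → Bool,
      (∀ k : Fin N,
        (∑ i, (B i k).toNat) + (∑ j, (B k j).toNat) - (B k k).toNat = 1) →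
      B ≠ (fun i j : Fin N => decide (i = j)) →
      (∑ i, ∑ j, (((fun i j : Fin N => decide (i = j)) i j).toNat : ℝ) * c i j) <
        (∑ i, ∑ j, ((B i j).toNat : ℝ) * c i j) := by
  refine ⟨isMatchingMatrix_id, fun B hB hne => ?_⟩
  change matchingCost c _ < matchingCost c B
  obtain ⟨i₀, j₀, hij₀, hB₀⟩ : ∃ i j, i ≠ j ∧ B i j = true := by
    by_contra! h
    exact hne <| IsMatchingMatrix.eq_id_of_offDiag_eq_false hB fun i j hij => by
      simpa using h i j hij
  rw [matchingCost_id hdiag, IsMatchingMatrix.matchingCost_eq hB c α, lt_add_iff_pos_right]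
  exact matchingCost_pos (reducedCost_nonneg hdiag hmin)
    (reducedCost_pos hij₀ (hmin i₀ j₀ hij₀)) hB₀

theorem stmt7 (N : ℕ) (α : ℝ) (c : Fin N → Fin N → ℝ)
    (hpos : ∀ i j, i ≠ j → 0 < c i j)
    (hdiag : ∀ i, c i i = α)
    (hmin : ∀ i j, i ≠ j → 2 * α < c i j) :
    (∀ k : Fin N,
      (∑ i, ((fun i j : Fin N => decide (i = j)) i k).toNat) +
        (∑ j, ((fun i j : Fin N => decide (i = j)) k j).toNat) -
        ((fun i j : Fin N => decide (i = j)) k k).toNat = 1) ∧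
    ∀ B : Fin N → Fin N → Bool,
      (∀ k : Fin N,
        (∑ i, (B i k).toNat) + (∑ j, (B k j).toNat) - (B k k).toNat = 1) →
      B ≠ (fun i j : Fin N => decide (i = j)) →
      (∑ i, ∑ j, (((fun i j : Fin N => decide (i = j)) i j).toNat : ℝ) * c i j) <
        (∑ i, ∑ j, ((B i j).toNat : ℝ) * c i j) :=
  stmt7_general N α c hdiag hmin
end
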